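/- arXiv:1108.2403 — 3 statements merged into one kernel-verified Lean document; each statement's English description precedes it below -/
import Mathlib

section
/- Let X be a finite set, F the free group on X, and (X, Q, Φ, R) a finite L-presentation with N the normal closure in F of Q ∪ ⋃_{σ∈Φ*} σ(R), such that σ(N) ⊆ N for every σ ∈ Φ (an invariant finite L-presentation), and set G = F/N. Let H be a normal subgroup of F of finite index with N ⊆ H and σ(H) ⊆ H for every σ ∈ Φ. Then the finite-index normal subgroup H/N of G is invariantly finitely L-presented. -/
/-- The kernel of a finite `L`-presentation: the normal closure in the free group of
`Q ∪ ⋃_{σ ∈ Φ*} σ(R)`, where `Φ*` is the submonoid of `End(F)` generated by `Φ`. -/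
def lpresKernel {X : Type} (Q R : Set (FreeGroup X))
    (Φ : Set (Monoid.End (FreeGroup X))) : Subgroup (FreeGroup X) :=
  Subgroup.normalClosure (Q ∪ ⋃ σ ∈ Submonoid.closure Φ, ⇑σ '' R)

instance lpresKernel_normal {X : Type} (Q R : Set (FreeGroup X))
    (Φ : Set (Monoid.End (FreeGroup X))) : (lpresKernel Q R Φ).Normal :=
  Subgroup.normalClosure_normal

/-- A group is finitely `L`-presented if it is isomorphic to the group presented by a
finite `L`-presentation `(X, Q, Φ, R)`. -/
def IsFinitelyLPresented (G : Type*) [Group G] : Prop :=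
  ∃ (n : ℕ) (Q R : Finset (FreeGroup (Fin n)))
    (Φ : Finset (Monoid.End (FreeGroup (Fin n)))),
    Nonempty (G ≃* FreeGroup (Fin n) ⧸ lpresKernel (Q : Set _) (R : Set _) (Φ : Set _))

/-- A group is invariantly finitely `L`-presented if it admits a finite `L`-presentation
`(X, Q, Φ, R)` such that each `σ ∈ Φ` leaves the kernel `N` invariant. -/
def IsInvariantlyFinitelyLPresented (G : Type*) [Group G] : Prop :=
  ∃ (n : ℕ) (Q R : Finset (FreeGroup (Fin n)))
    (Φ : Finset (Monoid.End (FreeGroup (Fin n)))),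
    (∀ σ ∈ Φ, ∀ g ∈ lpresKernel (Q : Set _) (R : Set _) (Φ : Set _),
        σ g ∈ lpresKernel (Q : Set _) (R : Set _) (Φ : Set _)) ∧
    Nonempty (G ≃* FreeGroup (Fin n) ⧸ lpresKernel (Q : Set _) (R : Set _) (Φ : Set _))

/-!
A finite-index subgroup `H` of the free group `F` is a finitely generated free group. As an
`L`-presentation of `H` take no fixed relators, the iterated relators `Q ∪ R`, and as
endomorphisms the restrictions of `Φ` to `H` together with the conjugations by the generators of
`F` and their inverses. Its kernel `K` is invariant under all conjugations by `F`, hence normal in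
`F`; being also `Φ`-invariant and containing `Q ∪ R`, it contains `N`. Conversely `N ∩ H` is
normal in `H`, contains `Q ∪ R` and is invariant under the new endomorphisms (here `σ(N) ⊆ N` is
used), so `K = N ∩ H` and `H/N ≅ H/K`. An `L`-presentation without fixed relators is
automatically invariant.
-/

open Subgroup

section LClosure

variable {G G' : Type*} [Group G] [Group G']

/-- `lpresKernel` over an arbitrary group. -/
def lNormalClosure (Q R : Set G) (Φ : Set (Monoid.End G)) : Subgroup G :=
  normalClosure (Q ∪ ⋃ σ ∈ Submonoid.closure Φ, ⇑σ '' R)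

def Subgroup.IsStableUnder (M : Subgroup G) (Φ : Set (Monoid.End G)) : Prop :=
  ∀ σ ∈ Φ, ∀ g ∈ M, σ g ∈ M

lemma Subgroup.IsStableUnder.closure {M : Subgroup G} {Φ : Set (Monoid.End G)}
    (hM : M.IsStableUnder Φ) : M.IsStableUnder (Submonoid.closure Φ) := by
  intro τ hτ
  induction hτ using Submonoid.closure_induction with
  | mem σ hσ => exact hM σ hσ
  | one => exact fun g hg => hg
  | mul σ τ _ _ hσ hτ => exact fun g hg => hσ _ (hτ g hg)

def MulEquiv.monoidEndCongr (e : G ≃* G') : _root_.Monoid.End G ≃* _root_.Monoid.End G' where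
  toFun σ := (e.toMonoidHom.comp σ).comp e.symm.toMonoidHom
  invFun σ := (e.symm.toMonoidHom.comp σ).comp e.toMonoidHom
  left_inv σ := by ext x; exact (e.symm_apply_apply _).trans (congrArg σ (e.symm_apply_apply x))
  right_inv σ := by ext x; exact (e.apply_symm_apply _).trans (congrArg σ (e.apply_symm_apply x))
  map_mul' σ τ := by ext x; exact congrArg (e ∘ σ) (e.symm_apply_apply _).symm

@[simp]
lemma MulEquiv.monoidEndCongr_apply (e : G ≃* G') (σ : _root_.Monoid.End G) (x : G') :
    e.monoidEndCongr σ x = e (σ (e.symm x)) :=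
  rfl

variable {Q R : Set G} {Φ : Set (Monoid.End G)}

instance lNormalClosure_normal : (lNormalClosure Q R Φ).Normal :=
  normalClosure_normal

lemma subset_lNormalClosure_left : Q ⊆ lNormalClosure Q R Φ :=
  fun _ hq => subset_normalClosure (Or.inl hq)

lemma apply_mem_lNormalClosure {σ : Monoid.End G} (hσ : σ ∈ Submonoid.closure Φ) {r : G}
    (hr : r ∈ R) : σ r ∈ lNormalClosure Q R Φ :=
  subset_normalClosure (Or.inr (Set.mem_biUnion hσ (Set.mem_image_of_mem σ hr)))

lemma subset_lNormalClosure_right : R ⊆ lNormalClosure Q R Φ :=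
  fun _ hr => apply_mem_lNormalClosure (one_mem _) hr

lemma lNormalClosure_le {M : Subgroup G} [M.Normal] (hQ : Q ⊆ M) (hR : R ⊆ M)
    (hM : M.IsStableUnder Φ) : lNormalClosure Q R Φ ≤ M :=
  normalClosure_le_normal <| Set.union_subset hQ <| Set.iUnion₂_subset fun σ hσ =>
    Set.image_subset_iff.2 fun r hr => hM.closure σ hσ r (hR hr)

lemma lNormalClosure_empty_isStableUnder :
    (lNormalClosure ∅ R Φ).IsStableUnder (Submonoid.closure Φ) := by
  intro τ hτ g hg
  have : ((lNormalClosure ∅ R Φ).comap (τ : G →* G)).Normal := Normal.comap inferInstance _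
  suffices lNormalClosure ∅ R Φ ≤ (lNormalClosure ∅ R Φ).comap (τ : G →* G) from this hg
  refine normalClosure_le_normal (Set.union_subset (Set.empty_subset _) ?_)
  refine Set.iUnion₂_subset fun σ hσ => Set.image_subset_iff.2 fun r hr => ?_
  exact apply_mem_lNormalClosure (Φ := Φ) (mul_mem hτ hσ) hr

lemma lNormalClosure_map_mulEquiv (e : G ≃* G') :
    (lNormalClosure Q R Φ).map (e : G →* G') =
      lNormalClosure (e '' Q) (e '' R) (e.monoidEndCongr '' Φ) := by
  rw [lNormalClosure, lNormalClosure, map_normalClosure _ _ e.surjective, Set.image_union,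
    ← MonoidHom.map_mclosure]
  congr 2
  ext x
  simp [Submonoid.mem_map]

lemma Subgroup.IsStableUnder.map_mulEquiv {M : Subgroup G} (hM : M.IsStableUnder Φ)
    (e : G ≃* G') : (M.map (e : G →* G')).IsStableUnder (e.monoidEndCongr '' Φ) := by
  rintro _ ⟨σ, hσ, rfl⟩ _ ⟨g, hg, rfl⟩
  exact ⟨σ g, hM σ hσ g hg, by simp⟩

end LClosure

lemma IsFreeGroup.exists_mulEquiv_freeGroup_fin (F : Type*) [Group F] [IsFreeGroup F]
    [Group.FG F] : ∃ m : ℕ, Nonempty (F ≃* FreeGroup (Fin m)) := by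
  have : Group.FG (FreeGroup (IsFreeGroup.Generators F)) :=
    Group.fg_of_surjective (f := (IsFreeGroup.toFreeGroup F).toMonoidHom)
      (IsFreeGroup.toFreeGroup F).surjective
  have : AddGroup.FG (FreeAbelianGroup (IsFreeGroup.Generators F)) :=
    GroupFG.iff_add_fg.mp <|
      Group.fg_of_surjective (f := Abelianization.of) Quotient.mk''_surjective
  have : Finite (IsFreeGroup.Generators F) :=
    Module.Finite.finite_basis (FreeAbelianGroup.basis _)
  exact ⟨_, ⟨(IsFreeGroup.toFreeGroup F).trans (FreeGroup.freeGroupCongr (Finite.equivFin _))⟩⟩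

section SubgroupPresentation

variable {F : Type*} [Group F] (H : Subgroup F)

def Subgroup.endRestrict (σ : Monoid.End F) (hσ : ∀ g ∈ H, σ g ∈ H) : Monoid.End H :=
  (σ.comp H.subtype).codRestrict H fun h => hσ h h.2

def Subgroup.conjEnd [H.Normal] : F →* Monoid.End H :=
  (MulDistribMulAction.toMonoidEnd (ConjAct F) H).comp ConjAct.toConjAct.toMonoidHom

lemma Subgroup.coe_conjEnd_apply [H.Normal] (f : F) (h : H) :
    (H.conjEnd f h : F) = f * h * f⁻¹ :=
  rfl

def Subgroup.restrictConjEnds [H.Normal] {Φ : Set (Monoid.End F)} (hH : H.IsStableUnder Φ)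
    (C : Set F) : Set (Monoid.End H) :=
  Set.range (fun σ : Φ => H.endRestrict σ (hH σ σ.2)) ∪ H.conjEnd '' (C ∪ C⁻¹)

variable {H} [H.Normal] {Φ : Set (Monoid.End F)} (hH : H.IsStableUnder Φ) {C : Set F}

lemma Subgroup.finite_restrictConjEnds (hΦ : Φ.Finite) (hC : C.Finite) :
    (H.restrictConjEnds hH C).Finite :=
  have := hΦ.to_subtype
  (Set.finite_range _).union ((hC.union hC.inv).image _)

lemma Subgroup.conjEnd_mem_closure_restrictConjEnds (hC : closure C = ⊤) (f : F) :
    H.conjEnd f ∈ Submonoid.closure (H.restrictConjEnds hH C) := by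
  have hf : f ∈ Submonoid.closure (C ∪ C⁻¹) := by
    rw [← closure_toSubmonoid, hC]
    trivial
  exact Submonoid.closure_mono Set.subset_union_right
    (MonoidHom.map_mclosure H.conjEnd _ ▸ Submonoid.mem_map_of_mem _ hf)

lemma Subgroup.normal_map_subtype {K : Subgroup H}
    (hK : ∀ f : F, ∀ k ∈ K, H.conjEnd f k ∈ K) : (K.map H.subtype).Normal where
  conj_mem := by
    rintro _ ⟨k, hk, rfl⟩ f
    exact ⟨H.conjEnd f k, hK f k hk, rfl⟩

theorem Subgroup.lNormalClosure_subgroupOf_eq {Q R : Set F} (hC : closure C = ⊤)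
    (hN : (lNormalClosure Q R Φ).IsStableUnder Φ) (hNH : lNormalClosure Q R Φ ≤ H) :
    (lNormalClosure Q R Φ).subgroupOf H =
      lNormalClosure ∅ (H.subtype ⁻¹' (Q ∪ R)) (H.restrictConjEnds hH C) := by
  set N := lNormalClosure Q R Φ
  set K := lNormalClosure ∅ (H.subtype ⁻¹' (Q ∪ R)) (H.restrictConjEnds hH C)
  have hQR : Q ∪ R ⊆ H := fun x hx =>
    hNH (hx.elim (subset_lNormalClosure_left ·) (subset_lNormalClosure_right ·))
  have hK : K.IsStableUnder (Submonoid.closure (H.restrictConjEnds hH C)) :=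
    lNormalClosure_empty_isStableUnder
  have : (K.map H.subtype).Normal :=
    normal_map_subtype fun f => hK _ (conjEnd_mem_closure_restrictConjEnds hH hC f)
  apply le_antisymm
  · have hQR_K : Q ∪ R ⊆ K.map H.subtype := fun x hx =>
      ⟨⟨x, hQR hx⟩, subset_lNormalClosure_right hx, rfl⟩
    have hNK : N ≤ K.map H.subtype := by
      refine lNormalClosure_le (fun x hx => hQR_K (Or.inl hx))
        (fun x hx => hQR_K (Or.inr hx)) ?_
      rintro σ hσ _ ⟨k, hk, rfl⟩
      refine ⟨H.endRestrict σ (hH σ hσ) k, hK _ (Submonoid.subset_closure ?_) k hk, rfl⟩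
      exact Or.inl ⟨⟨σ, hσ⟩, rfl⟩
    exact (comap_mono hNK).trans (comap_map_eq_self_of_injective H.subtype_injective K).le
  · refine lNormalClosure_le (Set.empty_subset _) ?_ ?_
    · rintro h (hq | hr)
      exacts [subset_lNormalClosure_left hq, subset_lNormalClosure_right hr]
    · rintro _ (⟨⟨σ, hσ⟩, rfl⟩ | ⟨f, -, rfl⟩) h hh
      · exact hN σ hσ _ hh
      · rw [mem_subgroupOf, coe_conjEnd_apply]
        exact (inferInstance : N.Normal).conj_mem _ hh f

end SubgroupPresentation

noncomputable def QuotientGroup.subgroupOfEquivMapMk {G : Type*} [Group G] (N H : Subgroup G)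
    [N.Normal] : H ⧸ N.subgroupOf H ≃* H.map (QuotientGroup.mk' N) :=
  (QuotientGroup.quotientMulEquivOfEq (by rw [ker_subgroupMap, QuotientGroup.ker_mk'])).trans
    (QuotientGroup.quotientKerEquivOfSurjective _ ((QuotientGroup.mk' N).subgroupMap_surjective H))

lemma IsInvariantlyFinitelyLPresented.of_mulEquiv_quotient {F G : Type*} [Group F]
    [IsFreeGroup F] [Group.FG F] [Group G] {Q R : Set F} {Φ : Set (Monoid.End F)} (hQ : Q.Finite)
    (hR : R.Finite) (hΦ : Φ.Finite) (hinv : (lNormalClosure Q R Φ).IsStableUnder Φ)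
    (φ : G ≃* F ⧸ lNormalClosure Q R Φ) : IsInvariantlyFinitelyLPresented G := by
  obtain ⟨m, ⟨e⟩⟩ := IsFreeGroup.exists_mulEquiv_freeGroup_fin F
  have hker : lpresKernel ↑(hQ.image e).toFinset ↑(hR.image e).toFinset
      ↑(hΦ.image e.monoidEndCongr).toFinset =
        (lNormalClosure Q R Φ).map (e : F →* FreeGroup (Fin m)) := by
    simp only [Set.Finite.coe_toFinset]
    exact (lNormalClosure_map_mulEquiv e).symm
  refine ⟨m, (hQ.image e).toFinset, (hR.image e).toFinset, (hΦ.image e.monoidEndCongr).toFinset,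
    ?_, ?_⟩
  · rw [hker]
    exact fun σ hσ => hinv.map_mulEquiv e σ ((Set.Finite.mem_toFinset _).1 hσ)
  · exact ⟨φ.trans (QuotientGroup.congr _ _ e hker.symm)⟩

/-- Theorem 6.1: let `(X, Q, Φ, R)` be an invariant finite `L`-presentation of
`G = F/N` and let `H` be a normal subgroup of the free group `F` of finite index
with `N ⊆ H` which is invariant under every `σ ∈ Φ`.  Then the finite-index normal
subgroup `H/N` of `G` is invariantly finitely `L`-presented. -/
theorem normal_phiInvariant_subgroup_isInvariantlyFinitelyLPresented
    (n : ℕ) (Q R : Finset (FreeGroup (Fin n)))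
    (Φ : Finset (Monoid.End (FreeGroup (Fin n))))
    (hinv : ∀ σ ∈ Φ, ∀ g ∈ lpresKernel (Q : Set _) (R : Set _) (Φ : Set _),
      σ g ∈ lpresKernel (Q : Set _) (R : Set _) (Φ : Set _))
    (H : Subgroup (FreeGroup (Fin n))) (hHn : H.Normal) (hHfi : H.FiniteIndex)
    (hNH : lpresKernel (Q : Set _) (R : Set _) (Φ : Set _) ≤ H)
    (hHinv : ∀ σ ∈ Φ, ∀ g ∈ H, σ g ∈ H) :
    IsInvariantlyFinitelyLPresented
      (H.map (QuotientGroup.mk' (lpresKernel (Q : Set _) (R : Set _) (Φ : Set _)))) := by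
  have hH : H.IsStableUnder Φ := hHinv
  have hker := H.lNormalClosure_subgroupOf_eq hH (FreeGroup.closure_range_of (Fin n)) hinv hNH
  have hR : (H.subtype ⁻¹' (Q ∪ R : Set _)).Finite :=
    (Set.toFinite _).preimage H.subtype_injective.injOn
  have hΦ := H.finite_restrictConjEnds hH Φ.finite_toSet (Set.finite_range FreeGroup.of)
  have φ :=
    (QuotientGroup.subgroupOfEquivMapMk _ H).symm.trans (QuotientGroup.quotientMulEquivOfEq hker)
  exact .of_mulEquiv_quotient Set.finite_empty hR hΦ
    (fun σ hσ => lNormalClosure_empty_isStableUnder σ (Submonoid.subset_closure hσ)) φ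
end

section
/- Let (X, Q, Φ, R) be an invariant finite L-presentation of G = F/N, where F is the free group on the finite set X, N is the normal closure in F of Q ∪ ⋃_{σ∈Φ*} σ(R), and σ(N) ⊆ N for all σ ∈ Φ. Let H be a normal subgroup of F of finite index with N ⊆ H, and let φ : F → Sym(H\F) be the permutation representation of F on the right cosets of H. For a word w = ψ₁ψ₂⋯ψ_n over Φ let ŵ ∈ End(F) denote the composite endomorphism obtained by applying ψ₁ first, then ψ₂, and so on. Suppose there is a finite set Ṽ of words over Φ which contains the empty word, is closed under deleting its first letter, is such that every word w over Φ satisfies ŵ ⤳_φ v̂ for some v ∈ Ṽ, and such that for every ψ ∈ Φ and every δ ∈ Ṽ with the word ψδ not in Ṽ one has (ψδ)̂ ⤳_φ id (the normal subgroup H/N of G is then called weakly leaf-invariant). Then H/N is invariantly finitely L-presented. -/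
/-- The permutation representation of a group `F` on the right cosets `H\F` of a
subgroup `H`, induced by right multiplication.  (With Mathlib's convention that
permutations compose right-to-left, the element `g` acts on a right coset `Hx`
as `Hx ↦ Hxg⁻¹`, which makes `g ↦ (Hx ↦ Hxg)` into a monoid homomorphism when
read in the usual left-to-right convention for permutation actions.) -/
def rightCosetRep {F : Type*} [Group F] (H : Subgroup F) :
    F →* Equiv.Perm (Quotient (QuotientGroup.rightRel H)) where
  toFun g :=
    { toFun := Quotient.map' (· * g⁻¹) fun a b hab => by
        rw [QuotientGroup.rightRel_apply] at hab ⊢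
        simpa [mul_assoc] using hab
      invFun := Quotient.map' (· * g) fun a b hab => by
        rw [QuotientGroup.rightRel_apply] at hab ⊢
        simpa [mul_assoc] using hab
      left_inv := fun q => Quotient.inductionOn' q fun a => by
        simp [Quotient.map'_mk'', mul_assoc]
      right_inv := fun q => Quotient.inductionOn' q fun a => by
        simp [Quotient.map'_mk'', mul_assoc] }
  map_one' := by
    ext q
    exact Quotient.inductionOn' q fun a => by simp [Quotient.map'_mk'']
  map_mul' x y := by
    ext q
    exact Quotient.inductionOn' q fun a => by simp [Quotient.map'_mk'', mul_assoc]

/-- For a word `w = [ψ₁, ψ₂, …, ψₙ]` over the endomorphisms of `F`, the composite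
endomorphism obtained by applying `ψ₁` first, then `ψ₂`, and so on. -/
def wordHat {F : Type*} [Group F] (w : List (Monoid.End F)) : Monoid.End F :=
  w.reverse.prod

/-- `σ ⤳_φ δ`: there is a group homomorphism `π` from the image of `φ ∘ δ` to the
codomain of `φ` such that `φ ∘ σ = π ∘ (φ ∘ δ)`. -/
def leadsTo {F S : Type*} [Group F] [Group S] (φ : F →* S)
    (σ δ : Monoid.End F) : Prop :=
  ∃ π : (φ.comp (δ : F →* F)).range →* S,
    ∀ g : F, φ (σ g) = π ⟨φ (δ g), ⟨g, rfl⟩⟩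

open Set Subgroup

lemma finite_of_fg_freeGroup {X : Type*} [Group.FG (FreeGroup X)] : Finite X := by
  have : Group.FG (Abelianization (FreeGroup X)) :=
    Group.fg_of_surjective (f := Abelianization.of) (QuotientGroup.mk'_surjective _)
  have : AddGroup.FG (FreeAbelianGroup X) := AddGroup.fg_iff_mul_fg.mpr this
  have : Module.Finite ℤ (FreeAbelianGroup X) := Module.Finite.iff_addGroup_fg.mpr this
  exact Module.Finite.finite_basis (FreeAbelianGroup.basis X)

lemma exists_freeGroup_injective_range_eq {X : Type*} [Finite X] (H : Subgroup (FreeGroup X))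
    [H.FiniteIndex] : ∃ (m : ℕ) (ι : FreeGroup (Fin m) →* FreeGroup X),
      Function.Injective ι ∧ ι.range = H := by
  have : Group.FG (FreeGroup (IsFreeGroup.Generators H)) :=
    Group.fg_of_surjective (f := (IsFreeGroup.toFreeGroup H).toMonoidHom)
      (IsFreeGroup.toFreeGroup H).surjective
  have : Finite (IsFreeGroup.Generators H) := finite_of_fg_freeGroup
  let θ : FreeGroup (Fin _) ≃* H :=
    (FreeGroup.freeGroupCongr (Finite.equivFin (IsFreeGroup.Generators H))).symm.trans
      (IsFreeGroup.toFreeGroup H).symm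
  refine ⟨_, H.subtype.comp θ.toMonoidHom, H.subtype_injective.comp θ.injective, ?_⟩
  rw [MonoidHom.range_comp, MonoidHom.range_eq_top.mpr θ.surjective, ← MonoidHom.range_eq_map,
    Subgroup.range_subtype]

lemma exists_finite_transversal {F : Type*} [Group F] (H : Subgroup F) [H.FiniteIndex] :
    ∃ T : Set F, T.Finite ∧ ∀ g, ∃ t ∈ T, t⁻¹ * g ∈ H := by
  refine ⟨range fun q : F ⧸ H => q.out, finite_range _, fun g => ?_⟩
  obtain ⟨h, hh⟩ := QuotientGroup.mk_out_eq_mul H g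
  exact ⟨_, mem_range_self (g : F ⧸ H), by simp [hh]⟩

section Words

variable {F : Type*} [Group F]

lemma wordHat_append (u v : List (Monoid.End F)) : wordHat (u ++ v) = wordHat v * wordHat u := by
  simp [wordHat]

lemma wordHat_mem_closure {Φ : Set (Monoid.End F)} {w : List (Monoid.End F)}
    (hw : ∀ ψ ∈ w, ψ ∈ Φ) : wordHat w ∈ Submonoid.closure Φ :=
  Submonoid.list_prod_mem _ fun ψ hψ => Submonoid.subset_closure (hw ψ (List.mem_reverse.mp hψ))

lemma exists_wordHat_eq_of_mem_closure {Φ : Set (Monoid.End F)} {σ : Monoid.End F}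
    (hσ : σ ∈ Submonoid.closure Φ) : ∃ w, (∀ ψ ∈ w, ψ ∈ Φ) ∧ wordHat w = σ := by
  obtain ⟨l, hl, rfl⟩ := Submonoid.exists_list_of_mem_closure hσ
  exact ⟨l.reverse, by simpa using hl, by simp [wordHat]⟩

def leafEnds (Φ : Set (Monoid.End F)) (V : Set (List (Monoid.End F))) : Set (Monoid.End F) :=
  {e | ∃ ψ ∈ Φ, ∃ δ ∈ V, ψ :: δ ∉ V ∧ wordHat (ψ :: δ) = e}

lemma leafEnds_finite {Φ : Set (Monoid.End F)} {V : Set (List (Monoid.End F))} (hΦ : Φ.Finite)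
    (hV : V.Finite) : (leafEnds Φ V).Finite :=
  (hΦ.image2 (fun ψ δ => wordHat (ψ :: δ)) hV).subset
    fun _ ⟨ψ, hψ, δ, hδ, _, he⟩ => ⟨ψ, hψ, δ, hδ, he⟩

variable {Φ : Set (Monoid.End F)} {V : Set (List (Monoid.End F))}

/- Grow the suffix `v` to the left while it stays in `V`; the letter that leaves `V` produces a
leaf, which is applied after everything to its right. -/
lemma exists_wordHat_append_eq_mul (hV : [] ∈ V) {w : List (Monoid.End F)}
    (hw : ∀ ψ ∈ w, ψ ∈ Φ) {v : List (Monoid.End F)} (hv : v ∈ V) :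
    ∃ μ ∈ Submonoid.closure (leafEnds Φ V), ∃ v' ∈ V, wordHat (w ++ v) = μ * wordHat v' := by
  induction w using List.reverseRecOn generalizing v with
  | nil => exact ⟨1, one_mem _, v, hv, (one_mul _).symm⟩
  | append_singleton w ψ ih =>
    have hw' : ∀ χ ∈ w, χ ∈ Φ := fun χ h => hw χ (List.mem_append_left _ h)
    rw [List.append_assoc, List.singleton_append]
    by_cases hψv : ψ :: v ∈ V
    · exact ih hw' hψv
    · obtain ⟨μ, hμ, v', hv', he⟩ := ih hw' hV
      have hleaf : wordHat (ψ :: v) ∈ leafEnds Φ V := ⟨ψ, hw ψ (by simp), v, hv, hψv, rfl⟩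
      refine ⟨wordHat (ψ :: v) * μ, mul_mem (Submonoid.subset_closure hleaf) hμ, v', hv', ?_⟩
      rw [wordHat_append, ← List.append_nil w, he, mul_assoc]

lemma exists_eq_mul_wordHat_of_mem_closure (hV : [] ∈ V) {σ : Monoid.End F}
    (hσ : σ ∈ Submonoid.closure Φ) :
    ∃ μ ∈ Submonoid.closure (leafEnds Φ V), ∃ v ∈ V, σ = μ * wordHat v := by
  obtain ⟨w, hw, rfl⟩ := exists_wordHat_eq_of_mem_closure hσ
  simpa using exists_wordHat_append_eq_mul hV hw hV

end Words

section Orbit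

variable {G : Type*} [Monoid G] {E : Set (Monoid.End G)} {S : Set G}

/-- `lpresKernel Q R Φ` is by definition the normal closure of `Q ∪ endOrbit Φ R`. -/
def endOrbit (E : Set (Monoid.End G)) (S : Set G) : Set G :=
  ⋃ σ ∈ Submonoid.closure E, ⇑σ '' S

lemma mem_endOrbit_iff {x : G} :
    x ∈ endOrbit E S ↔ ∃ σ ∈ Submonoid.closure E, ∃ s ∈ S, σ s = x := by
  simp [endOrbit]

lemma apply_mem_endOrbit {σ : Monoid.End G} (hσ : σ ∈ Submonoid.closure E) {s : G}
    (hs : s ∈ S) : σ s ∈ endOrbit E S :=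
  mem_endOrbit_iff.mpr ⟨σ, hσ, s, hs, rfl⟩

lemma subset_endOrbit : S ⊆ endOrbit E S :=
  fun _ hs => apply_mem_endOrbit (one_mem _) hs

lemma map_mem_endOrbit {e : Monoid.End G} (he : e ∈ E) {x : G} (hx : x ∈ endOrbit E S) :
    e x ∈ endOrbit E S := by
  obtain ⟨σ, hσ, s, hs, rfl⟩ := mem_endOrbit_iff.mp hx
  exact apply_mem_endOrbit (mul_mem (Submonoid.subset_closure he) hσ) hs

lemma mapsTo_of_mem_closure {P : Set G} (hE : ∀ e ∈ E, MapsTo e P P) {σ : Monoid.End G}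
    (hσ : σ ∈ Submonoid.closure E) : MapsTo σ P P := by
  induction hσ using Submonoid.closure_induction with
  | mem e he => exact hE e he
  | one => exact mapsTo_id P
  | mul σ τ _ _ hσ hτ => exact hσ.comp hτ

lemma endOrbit_subset {P : Set G} (hSP : S ⊆ P) (hE : ∀ e ∈ E, MapsTo e P P) :
    endOrbit E S ⊆ P := by
  intro x hx
  obtain ⟨σ, hσ, s, hs, rfl⟩ := mem_endOrbit_iff.mp hx
  exact mapsTo_of_mem_closure hE hσ (hSP hs)

end Orbit

section Pullback

variable {Y F : Type*} [Group F] (ι : FreeGroup Y →* F)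

/-- An endomorphism `e'` of `FreeGroup Y` with `ι ∘ e' = e ∘ ι` whenever `e` preserves the range
of `ι` (`apply_pullbackEnd`); elsewhere it is junk. -/
noncomputable def pullbackEnd (e : Monoid.End F) : Monoid.End (FreeGroup Y) :=
  FreeGroup.lift fun y => Function.invFun ι (e (ι (FreeGroup.of y)))

variable {ι}

lemma apply_pullbackEnd {e : Monoid.End F} (he : MapsTo e ι.range ι.range)
    (k : FreeGroup Y) : ι (pullbackEnd ι e k) = e (ι k) := by
  have : ι.comp (FreeGroup.lift fun y => Function.invFun ι (e (ι (FreeGroup.of y)))) =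
      MonoidHom.comp e ι :=
    FreeGroup.ext_hom _ _ fun y => by
      rw [MonoidHom.comp_apply, FreeGroup.lift_apply_of]
      exact Function.invFun_eq (he ⟨FreeGroup.of y, rfl⟩)
  exact DFunLike.congr_fun this k

lemma image_endOrbit_pullbackEnd {E : Set (Monoid.End F)}
    (hE : ∀ e ∈ E, MapsTo e ι.range ι.range) (S : Set (FreeGroup Y)) :
    ι '' endOrbit (pullbackEnd ι '' E) S = endOrbit E (ι '' S) := by
  apply Subset.antisymm
  · refine image_subset_iff.mpr (endOrbit_subset (fun s hs => subset_endOrbit ⟨s, hs, rfl⟩) ?_)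
    rintro _ ⟨e, he, rfl⟩ k hk
    rw [mem_preimage, apply_pullbackEnd (hE e he)]
    exact map_mem_endOrbit he hk
  · refine endOrbit_subset (image_mono subset_endOrbit) ?_
    rintro e he _ ⟨k, hk, rfl⟩
    exact ⟨pullbackEnd ι e k, map_mem_endOrbit (mem_image_of_mem _ he) hk,
      apply_pullbackEnd (hE e he) k⟩

end Pullback

section NormalClosure

variable {K F : Type*} [Group K] [Group F] {ι : K →* F} [ι.range.Normal] {T : Set F}
  {A : Set K}

lemma map_normalClosure_normal (hT : ∀ g, ∃ t ∈ T, t⁻¹ * g ∈ ι.range)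
    (hA : ∀ t ∈ T, ∀ a ∈ A, t * ι a * t⁻¹ ∈ ι '' A) : ((normalClosure A).map ι).Normal := by
  set C := (normalClosure A).map ι
  have hconj_range : ∀ k, ∀ x ∈ C, ι k * x * (ι k)⁻¹ ∈ C := by
    rintro k _ ⟨a, ha, rfl⟩
    exact ⟨k * a * k⁻¹, normalClosure_normal.conj_mem a ha k, by simp⟩
  have hconj_T : ∀ t ∈ T, ∀ x ∈ C, t * x * t⁻¹ ∈ C := by
    intro t ht
    let P : Subgroup K := C.comap ((MulAut.conj t).toMonoidHom.comp ι)
    have hP : P.Normal := ⟨fun k hk j => by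
      obtain ⟨j', hj'⟩ := ‹ι.range.Normal›.conj_mem (ι j) ⟨j, rfl⟩ t
      have : t * ι (j * k * j⁻¹) * t⁻¹ = ι j' * (t * ι k * t⁻¹) * (ι j')⁻¹ := by
        rw [hj']; simp only [map_mul, map_inv]; group
      have hk : t * ι k * t⁻¹ ∈ C := hk
      change t * ι (j * k * j⁻¹) * t⁻¹ ∈ C
      rw [this]
      exact hconj_range j' _ hk⟩
    have hAP : normalClosure A ≤ P := normalClosure_le_normal fun a ha => by
      obtain ⟨b, hb, hba⟩ := hA t ht a ha
      change t * ι a * t⁻¹ ∈ C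
      rw [← hba]
      exact mem_map_of_mem ι (subset_normalClosure hb)
    rintro _ ⟨k, hk, rfl⟩
    exact hAP hk
  refine ⟨fun x hx g => ?_⟩
  obtain ⟨t, ht, k, hk⟩ := hT g
  have : g * x * g⁻¹ = t * (ι k * x * (ι k)⁻¹) * t⁻¹ := by rw [hk]; group
  rw [this]
  exact hconj_T t ht _ (hconj_range k x hx)

/- The normal closure of `ι '' A` in `F` is already reached inside the normal subgroup
`ι.range`, because conjugation by a transversal `T` keeps `ι '' A`. -/
lemma comap_normalClosure_image (hι : Function.Injective ι)
    (hT : ∀ g, ∃ t ∈ T, t⁻¹ * g ∈ ι.range)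
    (hA : ∀ t ∈ T, ∀ a ∈ A, t * ι a * t⁻¹ ∈ ι '' A) :
    (normalClosure (ι '' A)).comap ι = normalClosure A := by
  have := map_normalClosure_normal hT hA
  apply le_antisymm
  · calc (normalClosure (ι '' A)).comap ι ≤ ((normalClosure A).map ι).comap ι :=
          comap_mono (normalClosure_le_normal (image_mono subset_normalClosure))
      _ = normalClosure A := comap_map_eq_self_of_injective hι _
  · exact normalClosure_le_normal fun a ha => subset_normalClosure ⟨a, ha, rfl⟩

end NormalClosure

section LPresentation

variable {X : Type} {Q R : Set (FreeGroup X)} {Φ : Set (Monoid.End (FreeGroup X))}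
  {V : Set (List (Monoid.End (FreeGroup X)))}

def baseRelators (Q R : Set (FreeGroup X)) (V : Set (List (Monoid.End (FreeGroup X)))) :
    Set (FreeGroup X) :=
  Q ∪ ⋃ v ∈ V, ⇑(wordHat v) '' R

lemma baseRelators_finite (hQ : Q.Finite) (hR : R.Finite) (hV : V.Finite) :
    (baseRelators Q R V).Finite :=
  hQ.union (hV.biUnion fun _ _ => hR.image _)

lemma baseRelators_subset_lpresKernel (hVΦ : ∀ v ∈ V, ∀ ψ ∈ v, ψ ∈ Φ) :
    baseRelators Q R V ⊆ lpresKernel Q R Φ := by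
  rintro b (hb | hb)
  · exact subset_normalClosure (Or.inl hb)
  · simp only [mem_iUnion] at hb
    obtain ⟨v, hv, r, hr, rfl⟩ := hb
    exact subset_normalClosure (Or.inr (apply_mem_endOrbit (wordHat_mem_closure (hVΦ v hv)) hr))

lemma lpresKernel_eq_normalClosure_endOrbit (hVΦ : ∀ v ∈ V, ∀ ψ ∈ v, ψ ∈ Φ) (hV : [] ∈ V)
    {E : Set (Monoid.End (FreeGroup X))} (hLE : leafEnds Φ V ⊆ E)
    (hE : ∀ e ∈ E, MapsTo e (lpresKernel Q R Φ) (lpresKernel Q R Φ)) :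
    lpresKernel Q R Φ = normalClosure (endOrbit E (baseRelators Q R V)) := by
  apply le_antisymm
  · refine normalClosure_mono (union_subset ?_ ?_)
    · exact subset_union_left.trans subset_endOrbit
    · intro x hx
      obtain ⟨σ, hσ, r, hr, rfl⟩ := mem_endOrbit_iff.mp hx
      obtain ⟨μ, hμ, v, hv, rfl⟩ := exists_eq_mul_wordHat_of_mem_closure hV hσ
      exact apply_mem_endOrbit (Submonoid.closure_mono hLE hμ)
        (Or.inr (mem_biUnion hv (mem_image_of_mem _ hr)))
  · exact normalClosure_le_normal (endOrbit_subset (baseRelators_subset_lpresKernel hVΦ) hE)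

lemma comap_normalClosure_endOrbit_eq_lpresKernel {Y : Type} {F : Type*} [Group F]
    {ι : FreeGroup Y →* F} (hι : Function.Injective ι) [ι.range.Normal] {T : Set F}
    (hT : ∀ g, ∃ t ∈ T, t⁻¹ * g ∈ ι.range) {E : Set (Monoid.End F)}
    (hTE : ∀ t ∈ T, (MulAut.conj t).toMonoidHom ∈ E) (hE : ∀ e ∈ E, MapsTo e ι.range ι.range)
    {B : Set F} (hB : B ⊆ ι.range) :
    (normalClosure (endOrbit E B)).comap ι =
      lpresKernel ∅ (Function.invFun ι '' B) (pullbackEnd ι '' E) := by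
  have hιB : ι '' (Function.invFun ι '' B) = B := by
    rw [image_image]
    exact (image_congr fun b hb => Function.invFun_eq (hB hb)).trans (image_id' B)
  have horbit := image_endOrbit_pullbackEnd hE (Function.invFun ι '' B)
  rw [hιB] at horbit
  rw [← horbit, comap_normalClosure_image hι hT, lpresKernel, empty_union]
  · rfl
  intro t ht a ha
  rw [horbit]
  exact map_mem_endOrbit (hTE t ht) (horbit ▸ mem_image_of_mem ι ha)

end LPresentation

lemma leadsTo.mapsTo_ker {F S : Type*} [Group F] [Group S] {φ : F →* S} {σ : Monoid.End F}
    (h : leadsTo φ σ 1) : MapsTo σ φ.ker φ.ker := by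
  obtain ⟨π, hπ⟩ := h
  intro g hg
  have : (⟨φ ((1 : Monoid.End F) g), g, rfl⟩ : (φ.comp ((1 : Monoid.End F) : F →* F)).range) = 1 :=
    Subtype.ext hg
  rw [SetLike.mem_coe, MonoidHom.mem_ker, hπ, this, map_one]

lemma ker_rightCosetRep {F : Type*} [Group F] (H : Subgroup F) [hH : H.Normal] :
    (rightCosetRep H).ker = H := by
  ext g
  constructor
  · intro hg
    have h1 : rightCosetRep H g (Quotient.mk'' 1) = Quotient.mk'' 1 := by rw [hg]; rfl
    have := Quotient.exact' h1
    rw [QuotientGroup.rightRel_apply] at this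
    simpa using this
  · intro hg
    ext q
    induction q using Quotient.inductionOn' with | h a => ?_
    refine Quotient.sound' ?_
    rw [QuotientGroup.rightRel_apply]
    simpa [mul_assoc] using hH.conj_mem _ hg a

noncomputable def mapMk'EquivQuotientComap {K F : Type*} [Group K] [Group F] (ι : K →* F)
    (N : Subgroup F) [N.Normal] : ι.range.map (QuotientGroup.mk' N) ≃* K ⧸ N.comap ι :=
  (MulEquiv.subgroupCongr (MonoidHom.range_comp _ _).symm).trans <|
    (QuotientGroup.quotientKerEquivRange _).symm.trans <|
      QuotientGroup.quotientMulEquivOfEq (by rw [← MonoidHom.comap_ker, QuotientGroup.ker_mk'])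

lemma isInvariantlyFinitelyLPresented_map_range {m : ℕ} {F : Type*} [Group F]
    {ι : FreeGroup (Fin m) →* F} {N : Subgroup F} [N.Normal] {B : Set F}
    {E : Set (Monoid.End F)} (hB : B.Finite) (hE : E.Finite)
    (hEι : ∀ e ∈ E, MapsTo e ι.range ι.range) (hEN : ∀ e ∈ E, MapsTo e N N)
    (hker : N.comap ι = lpresKernel ∅ (Function.invFun ι '' B) (pullbackEnd ι '' E)) :
    IsInvariantlyFinitelyLPresented (ι.range.map (QuotientGroup.mk' N)) := by
  set R' := (hB.image (Function.invFun ι)).toFinset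
  set Φ' := (hE.image (pullbackEnd ι)).toFinset
  have hker' : lpresKernel ((∅ : Finset (FreeGroup (Fin m))) : Set _) (R' : Set _) (Φ' : Set _) =
      N.comap ι := by
    rw [Finset.coe_empty, Set.Finite.coe_toFinset, Set.Finite.coe_toFinset, hker]
  refine ⟨m, ∅, R', Φ', ?_,
    ⟨(mapMk'EquivQuotientComap ι N).trans (QuotientGroup.quotientMulEquivOfEq hker'.symm)⟩⟩
  rw [hker']
  intro σ hσ g hg
  obtain ⟨e, he, rfl⟩ := (Set.Finite.mem_toFinset _).mp hσ
  rw [mem_comap, apply_pullbackEnd (hEι e he)]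
  exact hEN e he hg

theorem weaklyLeafInvariant_normal_subgroup_isInvariantlyFinitelyLPresented_general
    (n : ℕ) (Q R : Finset (FreeGroup (Fin n)))
    (Φ : Finset (Monoid.End (FreeGroup (Fin n))))
    (N : Subgroup (FreeGroup (Fin n))) (hNn : N.Normal)
    (hN : N = lpresKernel (Q : Set _) (R : Set _) (Φ : Set _))
    (hinv : ∀ σ ∈ Φ, ∀ g ∈ N, σ g ∈ N)
    (H : Subgroup (FreeGroup (Fin n))) (hHn : H.Normal) (hHfi : H.FiniteIndex)
    (hNH : N ≤ H)
    (φ : FreeGroup (Fin n) →* Equiv.Perm (Quotient (QuotientGroup.rightRel H)))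
    (hφ : φ = rightCosetRep H)
    (V : Finset (List (Monoid.End (FreeGroup (Fin n)))))
    (hVword : ∀ w ∈ V, ∀ ψ ∈ w, ψ ∈ Φ)
    (hVnil : ([] : List (Monoid.End (FreeGroup (Fin n)))) ∈ V)
    (hleaf : ∀ ψ ∈ Φ, ∀ δ ∈ V, ψ :: δ ∉ V →
      leadsTo φ (wordHat (ψ :: δ)) (1 : Monoid.End (FreeGroup (Fin n)))) :
    IsInvariantlyFinitelyLPresented (H.map (QuotientGroup.mk' N)) := by
  subst hφ
  obtain ⟨m, ι, hι, rfl⟩ := exists_freeGroup_injective_range_eq H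
  obtain ⟨T, hTfin, hT⟩ := exists_finite_transversal ι.range
  set E : Set (Monoid.End (FreeGroup (Fin n))) :=
    leafEnds Φ V ∪ (fun t => (MulAut.conj t).toMonoidHom) '' T
  have hEι : ∀ e ∈ E, MapsTo e ι.range ι.range := by
    rintro e (⟨ψ, hψ, δ, hδ, hψδ, rfl⟩ | ⟨t, -, rfl⟩)
    · simpa [ker_rightCosetRep] using (hleaf ψ hψ δ hδ hψδ).mapsTo_ker
    · exact fun g hg => hHn.conj_mem g hg t
  have hEN : ∀ e ∈ E, MapsTo e N N := by
    rintro e (⟨ψ, hψ, δ, hδ, -, rfl⟩ | ⟨t, -, rfl⟩)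
    · exact mapsTo_of_mem_closure hinv (wordHat_mem_closure (by simpa using ⟨hψ, hVword δ hδ⟩))
    · exact fun g hg => hNn.conj_mem g hg t
  subst hN
  refine isInvariantlyFinitelyLPresented_map_range
    (baseRelators_finite Q.finite_toSet R.finite_toSet V.finite_toSet)
    ((leafEnds_finite Φ.finite_toSet V.finite_toSet).union (hTfin.image _)) hEι hEN ?_
  rw [lpresKernel_eq_normalClosure_endOrbit hVword hVnil subset_union_left hEN]
  exact comap_normalClosure_endOrbit_eq_lpresKernel hι hT (fun t ht => Or.inr ⟨t, ht, rfl⟩) hEι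
    ((baseRelators_subset_lpresKernel hVword).trans hNH)

/-- Theorem 7.4: a weakly leaf-invariant normal subgroup of finite index in an
invariantly finitely `L`-presented group is invariantly finitely `L`-presented.
Here `G = F/N` is presented by the invariant finite `L`-presentation `(X, Q, Φ, R)`,
`H ⊴ F` is normal of finite index with `N ⊆ H`, `φ` is the permutation representation
of `F` on the right cosets of `H`, words over `Φ` are lists (with `ŵ` applying the
first letter first), and `H/N` is weakly leaf-invariant with respect to the finite
set of words `Ṽ` (here `V`) containing the empty word and closed under deleting the
first letter. -/
theorem weaklyLeafInvariant_normal_subgroup_isInvariantlyFinitelyLPresented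
    (n : ℕ) (Q R : Finset (FreeGroup (Fin n)))
    (Φ : Finset (Monoid.End (FreeGroup (Fin n))))
    (N : Subgroup (FreeGroup (Fin n))) (hNn : N.Normal)
    (hN : N = lpresKernel (Q : Set _) (R : Set _) (Φ : Set _))
    (hinv : ∀ σ ∈ Φ, ∀ g ∈ N, σ g ∈ N)
    (H : Subgroup (FreeGroup (Fin n))) (hHn : H.Normal) (hHfi : H.FiniteIndex)
    (hNH : N ≤ H)
    (φ : FreeGroup (Fin n) →* Equiv.Perm (Quotient (QuotientGroup.rightRel H)))
    (hφ : φ = rightCosetRep H)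
    (V : Finset (List (Monoid.End (FreeGroup (Fin n)))))
    (hVword : ∀ w ∈ V, ∀ ψ ∈ w, ψ ∈ Φ)
    (hVnil : ([] : List (Monoid.End (FreeGroup (Fin n)))) ∈ V)
    (hVtail : ∀ (ψ : Monoid.End (FreeGroup (Fin n)))
      (δ : List (Monoid.End (FreeGroup (Fin n)))), ψ :: δ ∈ V → δ ∈ V)
    (hVcover : ∀ w : List (Monoid.End (FreeGroup (Fin n))), (∀ ψ ∈ w, ψ ∈ Φ) →
      ∃ v ∈ V, leadsTo φ (wordHat w) (wordHat v))
    (hleaf : ∀ ψ ∈ Φ, ∀ δ ∈ V, ψ :: δ ∉ V →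
      leadsTo φ (wordHat (ψ :: δ)) (1 : Monoid.End (FreeGroup (Fin n)))) :
    IsInvariantlyFinitelyLPresented (H.map (QuotientGroup.mk' N)) :=
  weaklyLeafInvariant_normal_subgroup_isInvariantlyFinitelyLPresented_general n Q R Φ N hNn hN hinv
    H hHn hHfi hNH φ hφ V hVword hVnil hleaf
end

section
/- Let K be a group with a normal subgroup G such that G is finitely L-presented and the quotient K/G is finitely presented. Then K is finitely L-presented. -/
/-- A group is finitely presented if it is isomorphic to `F(X)/⟨R⟩^{F(X)}` for some
finite `X` and finite `R ⊆ F(X)`. -/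
def IsFinitelyPresentedGroup (G : Type*) [Group G] : Prop :=
  ∃ (n : ℕ) (R : Finset (FreeGroup (Fin n))),
    Nonempty (G ≃* FreeGroup (Fin n) ⧸ Subgroup.normalClosure (R : Set _))

open Pointwise in
theorem MonoidHom.ker_eq_of_ker_le_range_sup {E K F : Type*} [Group E] [Group K] [Group F]
    (π : E →* K) (ι : F →* E) (M : Subgroup E) [M.Normal] (hMπ : M ≤ π.ker)
    (hker : π.ker ≤ ι.range ⊔ M) (hι : ∀ f, π (ι f) = 1 → ι f ∈ M) : π.ker = M := by
  refine le_antisymm (fun w hw => ?_) hMπ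
  obtain ⟨_, ⟨f, rfl⟩, y, hy, rfl⟩ : w ∈ (ι.range : Set E) * (M : Set E) := by
    rw [← Subgroup.mul_normal]
    exact hker hw
  have hπy : π y = 1 := hMπ hy
  have hπf : π (ι f) = 1 := by simpa [hπy] using hw
  exact M.mul_mem (hι f hπf) hy

/-- Applying `ker_eq_of_ker_le_range_sup` to `K → K ⧸ G` and `κ` shows that `ι.range ⊔ M` is the
preimage of `G`; applying it again to `π` and `ι` gives the kernel. -/
theorem MonoidHom.ker_eq_of_extension {E K F₁ F₂ : Type*} [Group E] [Group K] [Group F₁]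
    [Group F₂] (π : E →* K) (G : Subgroup K) [G.Normal] (ι : F₁ →* E) (κ : F₂ →* E)
    (M : Subgroup E) [M.Normal] [(ι.range ⊔ M).Normal] (hMπ : M ≤ π.ker)
    (hιG : ∀ f, π (ι f) ∈ G) (hι : ∀ f, π (ι f) = 1 → ι f ∈ M)
    (hgen : ι.range ⊔ κ.range = ⊤) (hκ : ∀ e, π (κ e) ∈ G → κ e ∈ ι.range ⊔ M) :
    π.ker = M := by
  have hpreimage : ((QuotientGroup.mk' G).comp π).ker = ι.range ⊔ M := by
    refine ((QuotientGroup.mk' G).comp π).ker_eq_of_ker_le_range_sup κ _ ?_ ?_ ?_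
    · refine sup_le ?_ (hMπ.trans fun w hw => ?_)
      · rintro _ ⟨f, rfl⟩
        simpa using hιG f
      · simp_all
    · exact le_top.trans (hgen.ge.trans (sup_le (le_sup_of_le_right le_sup_left) le_sup_left))
    · intro e he
      exact hκ e (by simpa using he)
  refine π.ker_eq_of_ker_le_range_sup ι M hMπ ?_ hι
  rw [← hpreimage]
  intro w hw
  rw [MonoidHom.mem_ker] at hw ⊢
  simp [hw]

theorem Subgroup.normal_closure_sup_of_conj_mem {E : Type*} [Group E] {s t : Set E}
    (hs : closure s = ⊤) (M : Subgroup E) [hM : M.Normal]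
    (hconj : ∀ g ∈ s, ∀ x ∈ t, g * x * g⁻¹ ∈ closure t ⊔ M ∧ g⁻¹ * x * g ∈ closure t ⊔ M) :
    (closure t ⊔ M).Normal := by
  set A := closure t ⊔ M
  have conj_mem_of_generators : ∀ g : E, (∀ x ∈ t, g * x * g⁻¹ ∈ A) → ∀ a ∈ A, g * a * g⁻¹ ∈ A := by
    intro g hg
    suffices A ≤ A.comap (MulAut.conj g).toMonoidHom from fun a ha => this ha
    exact sup_le ((closure_le _).2 hg) fun y hy => mem_sup_right (hM.conj_mem y hy g)
  have conj_mem : ∀ g ∈ closure s, ∀ a ∈ A, g * a * g⁻¹ ∈ A := by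
    intro g hg
    induction hg using closure_induction'' with
    | mem g hg => exact conj_mem_of_generators g fun x hx => (hconj g hg x hx).1
    | inv_mem g hg =>
      exact conj_mem_of_generators g⁻¹ fun x hx => by simpa using (hconj g hg x hx).2
    | one => simp
    | mul g h _ _ hg hh =>
      intro a ha
      simpa [mul_assoc] using hg _ (hh a ha)
  exact ⟨fun a ha g => conj_mem g (hs ▸ mem_top g) a ha⟩

theorem MonoidHom.surjective_of_le_range_of_surjective_mk'_comp {E K : Type*} [Group E]
    [Group K] (π : E →* K) (G : Subgroup K) [G.Normal] (hG : G ≤ π.range)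
    (h : Function.Surjective ((QuotientGroup.mk' G).comp π)) : Function.Surjective π := by
  intro k
  obtain ⟨w, hw⟩ := h k
  obtain ⟨v, hv⟩ := hG (QuotientGroup.eq.1 hw)
  exact ⟨w * v, by rw [map_mul, hv, mul_inv_cancel_left]⟩

theorem MulEquiv.ker_symm_comp_mk' {H F : Type*} [Group H] [Group F] {N : Subgroup F}
    [N.Normal] (e : H ≃* F ⧸ N) : (e.symm.toMonoidHom.comp (QuotientGroup.mk' N)).ker = N := by
  rw [MonoidHom.ker_comp_of_injective _ _ e.symm.injective, QuotientGroup.ker_mk']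

section LPresKernel

variable {X Y : Type} {Q R : Set (FreeGroup X)} {Φ : Set (Monoid.End (FreeGroup X))}

theorem subset_lpresKernel : Q ⊆ lpresKernel Q R Φ :=
  fun _ hq => Subgroup.subset_normalClosure (Or.inl hq)

theorem apply_mem_lpresKernel {σ : Monoid.End (FreeGroup X)} (hσ : σ ∈ Submonoid.closure Φ)
    {r : FreeGroup X} (hr : r ∈ R) : σ r ∈ lpresKernel Q R Φ :=
  Subgroup.subset_normalClosure (Or.inr (Set.mem_biUnion hσ (Set.mem_image_of_mem σ hr)))

theorem lpresKernel_le {M : Subgroup (FreeGroup X)} [M.Normal] (hQ : Q ⊆ M)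
    (hR : ∀ σ ∈ Submonoid.closure Φ, ∀ r ∈ R, σ r ∈ M) : lpresKernel Q R Φ ≤ M := by
  refine Subgroup.normalClosure_le_normal (Set.union_subset hQ ?_)
  simp only [Set.iUnion_subset_iff, Set.image_subset_iff]
  exact hR

variable {Q' R' : Set (FreeGroup Y)} {Φ' : Set (Monoid.End (FreeGroup Y))}
  {ι : FreeGroup X →* FreeGroup Y} {Ψ : Monoid.End (FreeGroup X) →* Monoid.End (FreeGroup Y)}

theorem lpresKernel_le_comap (hΨ : ∀ σ x, Ψ σ (ι x) = ι (σ x)) (hQ : ι '' Q ⊆ Q')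
    (hR : ι '' R ⊆ R') (hΦ : Ψ '' Φ ⊆ Φ') :
    lpresKernel Q R Φ ≤ (lpresKernel Q' R' Φ').comap ι := by
  refine lpresKernel_le (fun q hq => subset_lpresKernel (hQ ⟨q, hq, rfl⟩)) fun σ hσ r hr => ?_
  have hΨσ : Ψ σ ∈ Submonoid.closure Φ' := by
    refine Submonoid.closure_mono hΦ ?_
    rw [← MonoidHom.map_mclosure]
    exact Submonoid.mem_map_of_mem Ψ hσ
  rw [Subgroup.mem_comap, ← hΨ]
  exact apply_mem_lpresKernel hΨσ (hR ⟨r, hr, rfl⟩)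

theorem lpresKernel_le_ker {K : Type*} [Group K] (π : FreeGroup Y →* K)
    (hΨ : ∀ σ x, Ψ σ (ι x) = ι (σ x)) (hN : lpresKernel Q R Φ ≤ (π.comp ι).ker)
    (hQ' : Q' ⊆ π.ker) (hR : R' ⊆ ι '' R) (hΦ : Φ' ⊆ Ψ '' Φ) :
    lpresKernel Q' R' Φ' ≤ π.ker := by
  refine lpresKernel_le hQ' fun σ' hσ' r' hr' => ?_
  replace hσ' := Submonoid.closure_mono hΦ hσ'
  rw [← MonoidHom.map_mclosure] at hσ'
  obtain ⟨σ, hσ, rfl⟩ := Submonoid.mem_map.1 hσ'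
  obtain ⟨r, hr, rfl⟩ := hR hr'
  rw [hΨ]
  exact hN (apply_mem_lpresKernel hσ hr)

end LPresKernel

theorem isFinitelyLPresented_of_surjective {K : Type*} [Group K] {n : ℕ}
    (π : FreeGroup (Fin n) →* K) (hπ : Function.Surjective π) (Q R : Finset (FreeGroup (Fin n)))
    (Φ : Finset (Monoid.End (FreeGroup (Fin n))))
    (hker : π.ker = lpresKernel (Q : Set _) (R : Set _) (Φ : Set _)) : IsFinitelyLPresented K :=
  ⟨n, Q, R, Φ, ⟨(QuotientGroup.quotientKerEquivOfSurjective π hπ).symm.trans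
    (QuotientGroup.quotientMulEquivOfEq hker)⟩⟩

namespace FreeGroup

variable (n m : ℕ)

def mapCastAdd : FreeGroup (Fin n) →* FreeGroup (Fin (n + m)) := map (Fin.castAdd m)

def mapNatAdd : FreeGroup (Fin m) →* FreeGroup (Fin (n + m)) := map (Fin.natAdd n)

variable {n m}

@[simp]
theorem mapCastAdd_of (i : Fin n) : mapCastAdd n m (of i) = of (Fin.castAdd m i) := map.of

@[simp]
theorem mapNatAdd_of (j : Fin m) : mapNatAdd n m (of j) = of (Fin.natAdd n j) := map.of

def extendEndAux (σ : Monoid.End (FreeGroup (Fin n))) :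
    FreeGroup (Fin (n + m)) →* FreeGroup (Fin (n + m)) :=
  lift (Fin.addCases (fun i => mapCastAdd n m (σ (of i))) fun j => of (Fin.natAdd n j))

@[simp]
theorem extendEndAux_of_castAdd (σ : Monoid.End (FreeGroup (Fin n))) (i : Fin n) :
    extendEndAux σ (of (Fin.castAdd m i)) = mapCastAdd n m (σ (of i)) :=
  lift_apply_of.trans (Fin.addCases_left _)

@[simp]
theorem extendEndAux_of_natAdd (σ : Monoid.End (FreeGroup (Fin n))) (j : Fin m) :
    extendEndAux σ (of (Fin.natAdd n j)) = of (Fin.natAdd n j) :=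
  lift_apply_of.trans (Fin.addCases_right _)

theorem extendEndAux_mapCastAdd (σ : Monoid.End (FreeGroup (Fin n))) (x : FreeGroup (Fin n)) :
    extendEndAux σ (mapCastAdd n m x) = mapCastAdd n m (σ x) := by
  change ((extendEndAux σ).comp (mapCastAdd n m)) x = ((mapCastAdd n m).comp σ) x
  exact DFunLike.congr_fun (ext_hom _ _ fun i => extendEndAux_of_castAdd σ i) x

variable (n m) in
def extendEnd : Monoid.End (FreeGroup (Fin n)) →* Monoid.End (FreeGroup (Fin (n + m))) where
  toFun := extendEndAux
  map_one' := by
    refine ext_hom _ _ fun k => ?_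
    induction k using Fin.addCases
    · exact extendEndAux_of_castAdd 1 _
    · exact extendEndAux_of_natAdd 1 _
  map_mul' σ τ := by
    refine ext_hom _ _ fun k => ?_
    change _ = extendEndAux σ (extendEndAux τ (of k))
    induction k using Fin.addCases with
    | left i => simp [extendEndAux_mapCastAdd]
    | right j => simp

theorem extendEnd_mapCastAdd (σ : Monoid.End (FreeGroup (Fin n))) (x : FreeGroup (Fin n)) :
    extendEnd n m σ (mapCastAdd n m x) = mapCastAdd n m (σ x) :=
  extendEndAux_mapCastAdd σ x

theorem range_mapCastAdd :
    (mapCastAdd n m).range = Subgroup.closure (Set.range fun i => of (Fin.castAdd m i)) := by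
  rw [MonoidHom.range_eq_map, ← closure_range_of, MonoidHom.map_closure, ← Set.range_comp]
  simp [Function.comp_def]

theorem range_mapCastAdd_sup_range_mapNatAdd :
    (mapCastAdd n m).range ⊔ (mapNatAdd n m).range = ⊤ := by
  rw [eq_top_iff, ← closure_range_of, Subgroup.closure_le]
  rintro _ ⟨k, rfl⟩
  induction k using Fin.addCases with
  | left i => exact Subgroup.mem_sup_left ⟨of i, mapCastAdd_of i⟩
  | right j => exact Subgroup.mem_sup_right ⟨of j, mapNatAdd_of j⟩

variable (n m) in
def conjugationWords : Finset (FreeGroup (Fin (n + m))) :=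
  (Finset.univ.image fun p : Fin n × Fin m =>
      of (Fin.natAdd n p.2) * of (Fin.castAdd m p.1) * (of (Fin.natAdd n p.2))⁻¹) ∪
    Finset.univ.image fun p : Fin n × Fin m =>
      (of (Fin.natAdd n p.2))⁻¹ * of (Fin.castAdd m p.1) * of (Fin.natAdd n p.2)

theorem normal_range_mapCastAdd_sup (M : Subgroup (FreeGroup (Fin (n + m)))) [M.Normal]
    (hconj : ∀ w ∈ conjugationWords n m, w ∈ (mapCastAdd n m).range ⊔ M) :
    ((mapCastAdd n m).range ⊔ M).Normal := by
  rw [range_mapCastAdd] at hconj ⊢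
  refine Subgroup.normal_closure_sup_of_conj_mem (closure_range_of _) M ?_
  rintro _ ⟨k, rfl⟩ _ ⟨i, rfl⟩
  induction k using Fin.addCases with
  | left i' =>
    set H := Subgroup.closure (Set.range fun i : Fin n => of (Fin.castAdd m i))
    have hx : ∀ k : Fin n, of (Fin.castAdd m k) ∈ H := fun k => Subgroup.subset_closure ⟨k, rfl⟩
    constructor <;> apply Subgroup.mem_sup_left <;> simp [Subgroup.mul_mem, hx]
  | right j => constructor <;> exact hconj _ (by simp [conjugationWords])

end FreeGroup

section Extension

open FreeGroup

variable {K : Type*} [Group K] {G : Subgroup K} [G.Normal] {n m : ℕ}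
  (ψ : FreeGroup (Fin n) →* G) (φ : FreeGroup (Fin m) →* K ⧸ G)

noncomputable def extensionLift : FreeGroup (Fin (n + m)) →* K :=
  lift (Fin.addCases (fun i => (ψ (of i) : K)) fun j => (φ (of j)).out)

theorem extensionLift_comp_mapCastAdd :
    (extensionLift ψ φ).comp (mapCastAdd n m) = G.subtype.comp ψ :=
  ext_hom _ _ fun i => by simp [extensionLift]

theorem mk'_comp_extensionLift_comp_mapNatAdd :
    ((QuotientGroup.mk' G).comp (extensionLift ψ φ)).comp (mapNatAdd n m) = φ :=
  ext_hom _ _ fun j => by simp [extensionLift]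

theorem extensionLift_mapCastAdd (f : FreeGroup (Fin n)) :
    extensionLift ψ φ (mapCastAdd n m f) = ψ f :=
  DFunLike.congr_fun (extensionLift_comp_mapCastAdd ψ φ) f

theorem mk_extensionLift_mapNatAdd (e : FreeGroup (Fin m)) :
    (extensionLift ψ φ (mapNatAdd n m e) : K ⧸ G) = φ e :=
  DFunLike.congr_fun (mk'_comp_extensionLift_comp_mapNatAdd ψ φ) e

theorem extensionLift_surjective (hψ : Function.Surjective ψ) (hφ : Function.Surjective φ) :
    Function.Surjective (extensionLift ψ φ) := by
  refine (extensionLift ψ φ).surjective_of_le_range_of_surjective_mk'_comp G ?_ ?_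
  · intro k hk
    obtain ⟨f, hf⟩ := hψ ⟨k, hk⟩
    exact ⟨mapCastAdd n m f, by rw [extensionLift_mapCastAdd, hf]⟩
  · intro q
    obtain ⟨e, rfl⟩ := hφ q
    exact ⟨mapNatAdd n m e, mk_extensionLift_mapNatAdd ψ φ e⟩

/-- `Function.invFun` picks `u` with `π (ι u) = π w`, where `ι = mapCastAdd n m`, whenever there is
one; otherwise `u` is arbitrary and the relator `w * (ι u)⁻¹` need not hold in the image of `π`. -/
noncomputable def imageRelators (π : FreeGroup (Fin (n + m)) →* K)
    (W : Finset (FreeGroup (Fin (n + m)))) : Finset (FreeGroup (Fin (n + m))) :=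
  W.image fun w => w * (mapCastAdd n m (Function.invFun (π.comp (mapCastAdd n m)) (π w)))⁻¹

theorem imageRelators_subset_ker {π : FreeGroup (Fin (n + m)) →* K}
    {W : Finset (FreeGroup (Fin (n + m)))} (hW : ∀ w ∈ W, π w ∈ (π.comp (mapCastAdd n m)).range) :
    (imageRelators π W : Set (FreeGroup (Fin (n + m)))) ⊆ π.ker := by
  simp only [imageRelators, Finset.coe_image, Set.image_subset_iff]
  intro w hw
  have hu := Function.invFun_eq (hW w hw)
  simp_all

theorem mem_range_mapCastAdd_sup_of_mem {π : FreeGroup (Fin (n + m)) →* K}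
    {W : Finset (FreeGroup (Fin (n + m)))} {M : Subgroup (FreeGroup (Fin (n + m)))}
    (hM : (imageRelators π W : Set (FreeGroup (Fin (n + m)))) ⊆ M) {w : FreeGroup (Fin (n + m))}
    (hw : w ∈ W) :
    w ∈ (mapCastAdd n m).range ⊔ M := by
  set u := Function.invFun ((π.comp (mapCastAdd n m))) (π w)
  have hrel : w * (mapCastAdd n m u)⁻¹ ∈ M := hM (Finset.mem_image_of_mem _ hw)
  have hu : mapCastAdd n m u ∈ (mapCastAdd n m).range := ⟨u, rfl⟩
  simpa using Subgroup.mul_mem _ (Subgroup.mem_sup_right hrel) (Subgroup.mem_sup_left hu)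

theorem range_extensionLift_comp_mapCastAdd (hψ : Function.Surjective ψ) :
    ((extensionLift ψ φ).comp (mapCastAdd n m)).range = G := by
  rw [extensionLift_comp_mapCastAdd, MonoidHom.range_comp, MonoidHom.range_eq_top.2 hψ,
    ← MonoidHom.range_eq_map, Subgroup.range_subtype]

theorem extensionLift_mem_of_mem {S : Finset (FreeGroup (Fin m))} (hS : ∀ s ∈ S, φ s = 1)
    {w : FreeGroup (Fin (n + m))} (hw : w ∈ conjugationWords n m ∪ S.image (mapNatAdd n m)) :
    extensionLift ψ φ w ∈ G := by
  have hx : ∀ i, extensionLift ψ φ (of (Fin.castAdd m i)) ∈ G := fun i => by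
    rw [← mapCastAdd_of, extensionLift_mapCastAdd]
    exact (ψ _).2
  simp only [conjugationWords, Finset.mem_union, Finset.mem_image, Finset.mem_univ,
    true_and] at hw
  rcases hw with (⟨⟨i, j⟩, rfl⟩ | ⟨⟨i, j⟩, rfl⟩) | ⟨s, hs, rfl⟩
  · simpa using ‹G.Normal›.conj_mem _ (hx i) (extensionLift ψ φ (of (Fin.natAdd n j)))
  · simpa using ‹G.Normal›.conj_mem _ (hx i) (extensionLift ψ φ (of (Fin.natAdd n j)))⁻¹
  · rw [← QuotientGroup.eq_one_iff, mk_extensionLift_mapNatAdd, hS s hs]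

noncomputable def extensionRelators (Q : Finset (FreeGroup (Fin n)))
    (S : Finset (FreeGroup (Fin m))) : Finset (FreeGroup (Fin (n + m))) :=
  Q.image (mapCastAdd n m) ∪
    imageRelators (extensionLift ψ φ) (conjugationWords n m ∪ S.image (mapNatAdd n m))

open Classical in
theorem ker_extensionLift (hψ : Function.Surjective ψ) (Q R : Finset (FreeGroup (Fin n)))
    (Φ : Finset (Monoid.End (FreeGroup (Fin n))))
    (hψker : ψ.ker = lpresKernel (Q : Set _) (R : Set _) (Φ : Set _))
    (S : Finset (FreeGroup (Fin m))) (hφker : φ.ker = Subgroup.normalClosure (S : Set _)) :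
    (extensionLift ψ φ).ker = lpresKernel (extensionRelators ψ φ Q S : Set _)
      (R.image (mapCastAdd n m) : Set _) (Φ.image (extendEnd n m) : Set _) := by
  set π := extensionLift ψ φ
  set W := conjugationWords n m ∪ S.image (mapNatAdd n m)
  set M := lpresKernel (extensionRelators ψ φ Q S : Set (FreeGroup (Fin (n + m))))
    (R.image (mapCastAdd n m) : Set (FreeGroup (Fin (n + m))))
    (Φ.image (extendEnd n m) : Set (Monoid.End (FreeGroup (Fin (n + m)))))
  have hπι : (π.comp (mapCastAdd n m)).ker = lpresKernel Q R Φ := by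
    rw [extensionLift_comp_mapCastAdd, MonoidHom.ker_comp_of_injective _ _ G.subtype_injective,
      hψker]
  have hW : ∀ w ∈ W, π w ∈ (π.comp (mapCastAdd n m)).range := by
    rw [range_extensionLift_comp_mapCastAdd ψ φ hψ]
    refine fun w => extensionLift_mem_of_mem ψ φ fun s hs => ?_
    rw [← MonoidHom.mem_ker, hφker]
    exact Subgroup.subset_normalClosure hs
  have hrel : (imageRelators π W : Set (FreeGroup (Fin (n + m)))) ⊆ M := fun w hw =>
    subset_lpresKernel (Finset.mem_union_right _ hw)
  have hM : lpresKernel Q R Φ ≤ M.comap (mapCastAdd n m) :=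
    lpresKernel_le_comap extendEnd_mapCastAdd (by simp [extensionRelators]) (by simp) (by simp)
  have : ((mapCastAdd n m).range ⊔ M).Normal := normal_range_mapCastAdd_sup M fun w hw =>
    mem_range_mapCastAdd_sup_of_mem hrel (Finset.mem_union_left _ hw)
  refine π.ker_eq_of_extension G (mapCastAdd n m) (mapNatAdd n m) M ?_ ?_ ?_
    range_mapCastAdd_sup_range_mapNatAdd ?_
  · refine lpresKernel_le_ker π extendEnd_mapCastAdd hπι.ge ?_ (by simp) (by simp)
    rw [extensionRelators, Finset.coe_union, Finset.coe_image]
    refine Set.union_subset ?_ (imageRelators_subset_ker hW)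
    rintro _ ⟨q, hq, rfl⟩
    exact hπι.ge (subset_lpresKernel hq)
  · intro f
    rw [extensionLift_mapCastAdd]
    exact (ψ f).2
  · exact fun f hf => hM (hπι.le hf)
  · intro e he
    have he' : e ∈ Subgroup.normalClosure (S : Set _) := by
      rwa [← hφker, MonoidHom.mem_ker, ← mk_extensionLift_mapNatAdd ψ φ, QuotientGroup.eq_one_iff]
    refine Subgroup.normalClosure_le_normal (N := ((mapCastAdd n m).range ⊔ M).comap
      (mapNatAdd n m)) (fun s hs => ?_) he'
    exact mem_range_mapCastAdd_sup_of_mem hrel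
      (Finset.mem_union_right _ (Finset.mem_image_of_mem _ hs))

end Extension

/-- Proposition 2.3: an extension of a finitely `L`-presented group by a finitely
presented group is finitely `L`-presented. -/
theorem extension_of_finitelyLPresented_by_finitelyPresented
    {K : Type*} [Group K] (G : Subgroup K) (hGn : G.Normal)
    (hG : IsFinitelyLPresented G)
    (hQ : IsFinitelyPresentedGroup (K ⧸ G)) :
    IsFinitelyLPresented K := by
  obtain ⟨n, Q, R, Φ, ⟨e₁⟩⟩ := hG
  obtain ⟨m, S, ⟨e₂⟩⟩ := hQ
  set ψ := e₁.symm.toMonoidHom.comp (QuotientGroup.mk' _)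
  set φ := e₂.symm.toMonoidHom.comp (QuotientGroup.mk' _)
  have hψ : Function.Surjective ψ := e₁.symm.surjective.comp (QuotientGroup.mk'_surjective _)
  have hφ : Function.Surjective φ := e₂.symm.surjective.comp (QuotientGroup.mk'_surjective _)
  exact isFinitelyLPresented_of_surjective _ (extensionLift_surjective ψ φ hψ hφ) _ _ _
    (ker_extensionLift ψ φ hψ Q R Φ e₁.ker_symm_comp_mk' S e₂.ker_symm_comp_mk')
end
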